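/- arXiv:2305.15626 — 5 statements merged into one kernel-verified Lean document; each statement's English description precedes it below -/
import Mathlib

section
/- Let a > 0 be a real number. For every x > 0 and all t₁, t₂ ∈ [−1, 1], one has (S_a(x)/8)·t₁² + Λ_a(x)·t₁t₂ + (K_a(x)/8)·t₂² + (S_a(x) − K_a(x))/24 > 0. -/
/-- `e^{2aξ₂}` times the scalar curvature of the Cao-type steady GKRS on `ℂ²`. -/
noncomputable def ScalS (a x : ℝ) : ℝ :=
  4 * a ^ 2 * (Real.exp (2 * a * x) - 1) / x

/-- `e^{2aξ₂}` times the conformal scalar curvature `κ_I`. -/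
noncomputable def ConfK (a x : ℝ) : ℝ :=
  4 * a ^ 2 * (Real.exp (2 * a * x) - 1) / x
    - 12 * a * (Real.exp (2 * a * x) + 1) / x ^ 2
    + 12 * (Real.exp (2 * a * x) - 1) / x ^ 3

/-- `e^{2aξ₂}` times the eigenvalue `λ` of the trace-free Ricci tensor. -/
noncomputable def LamΛ (a x : ℝ) : ℝ :=
  a ^ 2 * (Real.exp (2 * a * x) + 1) / x - a * (Real.exp (2 * a * x) - 1) / x ^ 2

/-!
Completing the square in `t₁`, the form is positive on `ℝ × [-1, 1]` once `S > 0`, its constant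
term `(S - K) / 24` is positive, and its discriminant condition holds at `t₂² = 1`, which reads
`48 Λ² < S (S + 2K)`. With `u = 2ax` and `E = e^u`, the constant term is a positive multiple of
`u (E + 1) - 2 (E - 1)`, i.e. of `u/2 - tanh (u/2)`, and `S (S + 2K) - 48 Λ²` is a positive multiple
of `(E - 1)² - u² E`, i.e. of `sinh (u/2) - u/2`.
-/

open Real

lemma sinh_lt_mul_cosh {v : ℝ} (hv : 0 < v) : sinh v < v * cosh v := by
  have hmono : StrictMonoOn (fun y => y * cosh y - sinh y) (Set.Ici 0) := by
    refine strictMonoOn_of_deriv_pos (convex_Ici 0) (by fun_prop) fun y hy => ?_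
    rw [interior_Ici, Set.mem_Ioi] at hy
    have hderiv : deriv (fun y => y * cosh y - sinh y) y = y * sinh y := by
      simp
    rw [hderiv]
    exact mul_pos hy (sinh_pos_iff.mpr hy)
  simpa using hmono Set.self_mem_Ici hv.le hv

lemma two_mul_exp_sub_one_lt {u : ℝ} (hu : 0 < u) : 2 * (exp u - 1) < u * (exp u + 1) := by
  have h := sinh_lt_mul_cosh (half_pos hu)
  rw [sinh_eq, cosh_eq] at h
  have hsq : exp u = exp (u / 2) * exp (u / 2) := by rw [← exp_add, add_halves]
  have hinv : exp (u / 2) * exp (-(u / 2)) = 1 := by rw [← exp_add, add_neg_cancel, exp_zero]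
  nlinarith [mul_lt_mul_of_pos_left h (exp_pos (u / 2))]

lemma sq_mul_exp_lt_sq {u : ℝ} (hu : 0 < u) : u ^ 2 * exp u < (exp u - 1) ^ 2 := by
  have h := self_lt_sinh_iff.mpr (half_pos hu)
  rw [sinh_eq] at h
  have hsq : exp u = exp (u / 2) * exp (u / 2) := by rw [← exp_add, add_halves]
  have hinv : exp (u / 2) * exp (-(u / 2)) = 1 := by rw [← exp_add, add_neg_cancel, exp_zero]
  have hlt : u * exp (u / 2) < exp u - 1 := by
    nlinarith [mul_lt_mul_of_pos_left h (exp_pos (u / 2))]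
  have hpos : 0 < u * exp (u / 2) := mul_pos hu (exp_pos _)
  calc u ^ 2 * exp u = (u * exp (u / 2)) ^ 2 := by rw [hsq]; ring
    _ < (exp u - 1) ^ 2 := pow_lt_pow_left₀ hlt hpos.le two_ne_zero

lemma quadratic_pos_of_sq_le_one {s c k m t₁ t₂ : ℝ} (hs : 0 < s) (hm : 0 < m)
    (hdisc : c ^ 2 < 4 * s * (k + m)) (ht₂ : t₂ ^ 2 ≤ 1) :
    0 < s * t₁ ^ 2 + c * t₁ * t₂ + k * t₂ ^ 2 + m := by
  have hcompl : 4 * s * (s * t₁ ^ 2 + c * t₁ * t₂ + k * t₂ ^ 2 + m)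
      = (2 * s * t₁ + c * t₂) ^ 2 + ((4 * s * k - c ^ 2) * t₂ ^ 2 + 4 * s * m) := by ring
  have hrest : 0 < (4 * s * k - c ^ 2) * t₂ ^ 2 + 4 * s * m := by
    rcases le_or_gt 0 (4 * s * k - c ^ 2) with hD | hD
    · positivity
    · nlinarith [mul_le_mul_of_nonpos_left ht₂ hD.le]
  have : 0 < 4 * s * (s * t₁ ^ 2 + c * t₁ * t₂ + k * t₂ ^ 2 + m) := by
    rw [hcompl]; positivity
  exact pos_of_mul_pos_right this (by positivity)

section

variable {a x : ℝ}

lemma ScalS_pos (ha : 0 < a) (hx : 0 < x) : 0 < ScalS a x := by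
  have : 0 < exp (2 * a * x) - 1 := sub_pos.mpr (one_lt_exp_iff.mpr (by positivity))
  unfold ScalS
  positivity

lemma ConfK_lt_ScalS (ha : 0 < a) (hx : 0 < x) : ConfK a x < ScalS a x := by
  have hnum := sub_pos.mpr (two_mul_exp_sub_one_lt (show 0 < 2 * a * x by positivity))
  have hdiff : ScalS a x - ConfK a x
      = 6 * (2 * a * x * (exp (2 * a * x) + 1) - 2 * (exp (2 * a * x) - 1)) / x ^ 3 := by
    unfold ScalS ConfK
    field_simp
    ring
  rw [← sub_pos, hdiff]
  positivity

lemma ScalS_mul_sub_LamΛ_sq (hx : x ≠ 0) :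
    ScalS a x * (ScalS a x + 2 * ConfK a x) - 48 * LamΛ a x ^ 2
      = 48 * a ^ 2 * ((exp (2 * a * x) - 1) ^ 2 - (2 * a * x) ^ 2 * exp (2 * a * x)) / x ^ 4 := by
  unfold ScalS ConfK LamΛ
  field_simp
  ring

lemma LamΛ_sq_lt (ha : 0 < a) (hx : 0 < x) :
    48 * LamΛ a x ^ 2 < ScalS a x * (ScalS a x + 2 * ConfK a x) := by
  have hnum := sub_pos.mpr (sq_mul_exp_lt_sq (show 0 < 2 * a * x by positivity))
  rw [← sub_pos, ScalS_mul_sub_LamΛ_sq hx.ne']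
  positivity

end

theorem sectional_curvature_positive_general (a : ℝ) (ha : 0 < a) (x : ℝ) (hx : 0 < x)
    (t₁ t₂ : ℝ) (ht₂ : t₂ ∈ Set.Icc (-1 : ℝ) 1) :
    0 < (ScalS a x / 8) * t₁ ^ 2 + LamΛ a x * t₁ * t₂ + (ConfK a x / 8) * t₂ ^ 2
          + (ScalS a x - ConfK a x) / 24 := by
  have ht₂sq : t₂ ^ 2 ≤ 1 := (sq_le_one_iff_abs_le_one t₂).mpr (abs_le.mpr ht₂)
  refine quadratic_pos_of_sq_le_one (by linarith [ScalS_pos ha hx])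
    (by linarith [ConfK_lt_ScalS ha hx]) ?_ ht₂sq
  linarith [LamΛ_sq_lt ha hx]

/-- Positivity of the sectional curvature of the Cao-type steady gradient
Kähler–Ricci solitons on `ℂ²`. -/
theorem sectional_curvature_positive (a : ℝ) (ha : 0 < a) (x : ℝ) (hx : 0 < x)
    (t₁ t₂ : ℝ) (ht₁ : t₁ ∈ Set.Icc (-1 : ℝ) 1) (ht₂ : t₂ ∈ Set.Icc (-1 : ℝ) 1) :
    0 < (ScalS a x / 8) * t₁ ^ 2 + LamΛ a x * t₁ * t₂ + (ConfK a x / 8) * t₂ ^ 2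
          + (ScalS a x - ConfK a x) / 24 :=
  sectional_curvature_positive_general a ha x hx t₁ t₂ ht₂
end

section
/- Let a > 0 be a real number. For every x > 0 and every t ∈ [−1, 1], one has S_a(x)/6 − K_a(x)/24 + (K_a(x)/8)·t² + Λ_a(x)·t > 0. -/
open Real

lemma cubic_le_exp_of_nonneg {u : ℝ} (hu : 0 ≤ u) : 1 + u + u ^ 2 / 2 + u ^ 3 / 6 ≤ exp u := by
  have h := sum_le_exp_of_nonneg hu 4
  norm_num [Finset.sum_range_succ, Nat.factorial] at h
  linarith

lemma one_add_add_sq_div_two_lt_exp {u : ℝ} (hu : 0 < u) : 1 + u + u ^ 2 / 2 < exp u := by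
  have := cubic_le_exp_of_nonneg hu.le
  have : 0 < u ^ 3 := by positivity
  linarith

lemma one_lt_one_sub_add_sq_div_two_mul_exp {u : ℝ} (hu : 0 < u) :
    1 < (1 - u + u ^ 2 / 2) * exp u := by
  have hq : 0 ≤ 1 - u + u ^ 2 / 2 := by nlinarith [sq_nonneg (u - 1)]
  calc 1 < (1 - u + u ^ 2 / 2) * (1 + u + u ^ 2 / 2 + u ^ 3 / 6) := by
        nlinarith [pow_pos hu 3, pow_pos hu 4, pow_pos hu 5]
    _ ≤ (1 - u + u ^ 2 / 2) * exp u := mul_le_mul_of_nonneg_left (cubic_le_exp_of_nonneg hu.le) hq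

lemma two_mul_le_log_sub_log {b : ℝ} (hb : 0 ≤ b) (hb1 : b < 1) :
    2 * b ≤ log (1 + b) - log (1 - b) := by
  have hsum := hasSum_log_sub_log_of_abs_lt_one (abs_lt.mpr ⟨by linarith, hb1⟩)
  simpa using le_hasSum hsum 0 fun k _ ↦ by positivity

lemma one_sub_mul_exp_two_mul_le {b : ℝ} (hb : 0 ≤ b) : (1 - b) * exp (2 * b) ≤ 1 + b := by
  rcases lt_or_ge b 1 with hb1 | hb1
  · have hexp : exp (2 * b) ≤ (1 + b) / (1 - b) := by
      calc exp (2 * b) ≤ exp (log (1 + b) - log (1 - b)) :=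
            exp_le_exp.mpr (two_mul_le_log_sub_log hb hb1)
        _ = (1 + b) / (1 - b) := by
            rw [exp_sub, exp_log (by linarith), exp_log (by linarith)]
    have h1b : 0 < 1 - b := by linarith
    calc (1 - b) * exp (2 * b) ≤ (1 - b) * ((1 + b) / (1 - b)) :=
          mul_le_mul_of_nonneg_left hexp h1b.le
      _ = 1 + b := by field_simp
  · nlinarith [exp_pos (2 * b)]

lemma four_mul_cube_mul_curvature_eq {a x : ℝ} (hx : x ≠ 0) (t : ℝ) :
    4 * x ^ 3 * (ScalS a x / 6 - ConfK a x / 24 + (ConfK a x / 8) * t ^ 2 + LamΛ a x * t) =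
      ((2 * (a * x) ^ 2 - 2 * (a * x) + 1) * exp (2 * (a * x)) - 1) * (1 + t) ^ 2
        + (exp (2 * (a * x)) - 1 - 2 * (a * x) - 2 * (a * x) ^ 2) * (1 - t) ^ 2
        + 4 * ((a * x - 1) * exp (2 * (a * x)) + a * x + 1) * (1 - t ^ 2) := by
  rw [ScalS, ConfK, LamΛ, ← mul_assoc]
  field_simp
  ring

lemma quadratic_pos_of_mem_Icc {A B C t : ℝ} (hA : 0 < A) (hB : 0 < B) (hC : 0 ≤ C)
    (ht : t ∈ Set.Icc (-1 : ℝ) 1) :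
    0 < A * (1 + t) ^ 2 + B * (1 - t) ^ 2 + 4 * C * (1 - t ^ 2) := by
  obtain ⟨ht1, ht2⟩ := ht
  have hC' : 0 ≤ 4 * C * (1 - t ^ 2) := mul_nonneg (by positivity) (by nlinarith)
  rcases le_total 0 t with ht0 | ht0
  · nlinarith [mul_pos hA (by nlinarith : (0 : ℝ) < (1 + t) ^ 2), mul_nonneg hB.le (sq_nonneg (1 - t))]
  · nlinarith [mul_pos hB (by nlinarith : (0 : ℝ) < (1 - t) ^ 2), mul_nonneg hA.le (sq_nonneg (1 + t))]

/-- Positivity of the holomorphic sectional curvature of the Cao-type steady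
gradient Kähler–Ricci solitons on `ℂ²`. -/
theorem holomorphic_sectional_curvature_positive (a : ℝ) (ha : 0 < a)
    (x : ℝ) (hx : 0 < x) (t : ℝ) (ht : t ∈ Set.Icc (-1 : ℝ) 1) :
    0 < ScalS a x / 6 - ConfK a x / 24 + (ConfK a x / 8) * t ^ 2 + LamΛ a x * t := by
  have hb : 0 < a * x := mul_pos ha hx
  have hA : 0 < (2 * (a * x) ^ 2 - 2 * (a * x) + 1) * exp (2 * (a * x)) - 1 := by
    have := one_lt_one_sub_add_sq_div_two_mul_exp (mul_pos two_pos hb)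
    nlinarith
  have hB : 0 < exp (2 * (a * x)) - 1 - 2 * (a * x) - 2 * (a * x) ^ 2 := by
    have := one_add_add_sq_div_two_lt_exp (mul_pos two_pos hb)
    nlinarith
  have hC : 0 ≤ (a * x - 1) * exp (2 * (a * x)) + a * x + 1 := by
    have := one_sub_mul_exp_two_mul_le hb.le
    nlinarith
  have h := quadratic_pos_of_mem_Icc hA hB hC ht
  rw [← four_mul_cube_mul_curvature_eq hx.ne'] at h
  exact pos_of_mul_pos_right h (by positivity)
end

section
/- Let a > 0 be a real number. For every x > 0 one has 0 ≤ Λ_a(x) < S_a(x)/4; equivalently, 0 ≤ a²(e^{2ax} + 1)/x − a(e^{2ax} − 1)/x² < a²(e^{2ax} − 1)/x. -/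
/-!
With `u = a x`, both `x² Λ_a(x) / a = u (e^{2u} + 1) - (e^{2u} - 1)` and
`x² (S_a(x)/4 - Λ_a(x)) / a = e^{2u} - 1 - 2u` are functions of `u` alone. The second is positive
because `e^t > 1 + t` for `t ≠ 0`; dividing the first by `2 e^u` gives `u cosh u - sinh u`, which
vanishes at `0` and is monotone since its derivative is `u sinh u ≥ 0`.
-/

open Real

namespace Real

lemma mul_sinh_self_nonneg (u : ℝ) : 0 ≤ u * sinh u := by
  rcases le_total 0 u with hu | hu
  · exact mul_nonneg hu (sinh_nonneg_iff.2 hu)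
  · exact mul_nonneg_of_nonpos_of_nonpos hu (sinh_nonpos_iff.2 hu)

lemma monotone_mul_cosh_sub_sinh : Monotone fun u : ℝ => u * cosh u - sinh u := by
  refine monotone_of_hasDerivAt_nonneg (f' := fun u => u * sinh u) (fun u => ?_)
    mul_sinh_self_nonneg
  refine (((hasDerivAt_id' u).mul (hasDerivAt_cosh u)).sub (hasDerivAt_sinh u)).congr_deriv ?_
  ring

lemma sinh_le_mul_cosh {u : ℝ} (hu : 0 ≤ u) : sinh u ≤ u * cosh u := by
  simpa using monotone_mul_cosh_sub_sinh hu

lemma exp_two_mul_sub_one_le {u : ℝ} (hu : 0 ≤ u) :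
    exp (2 * u) - 1 ≤ u * (exp (2 * u) + 1) := by
  have h := mul_le_mul_of_nonneg_left (sinh_le_mul_cosh hu) (by positivity : 0 ≤ 2 * exp u)
  have hexp : exp (2 * u) = exp u * exp u := by rw [← exp_add, two_mul]
  rw [sinh_eq, cosh_eq, exp_neg] at h
  rw [hexp]
  field_simp at h
  linarith

end Real

lemma LamΛ_eq (a : ℝ) {x : ℝ} (hx : x ≠ 0) :
    LamΛ a x = a / x ^ 2 * (a * x * (exp (2 * (a * x)) + 1) - (exp (2 * (a * x)) - 1)) := by
  rw [LamΛ, ← mul_assoc]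
  field_simp

lemma ScalS_div_four_sub_LamΛ (a : ℝ) {x : ℝ} (hx : x ≠ 0) :
    ScalS a x / 4 - LamΛ a x = a / x ^ 2 * (exp (2 * (a * x)) - 1 - 2 * (a * x)) := by
  rw [ScalS, LamΛ, ← mul_assoc]
  field_simp
  ring

/-- Positivity of the Ricci curvature of the Cao-type steady gradient
Kähler–Ricci solitons on `ℂ²`: `0 ≤ Λ_a(x) < S_a(x)/4` for all `x > 0`. -/
theorem ricci_curvature_positive (a : ℝ) (ha : 0 < a) (x : ℝ) (hx : 0 < x) :
    0 ≤ LamΛ a x ∧ LamΛ a x < ScalS a x / 4 := by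
  have hu : 0 < a * x := mul_pos ha hx
  have hcoeff : 0 < a / x ^ 2 := by positivity
  constructor
  · rw [LamΛ_eq a hx.ne']
    exact mul_nonneg hcoeff.le (sub_nonneg.2 (exp_two_mul_sub_one_le hu.le))
  · rw [← sub_pos, ScalS_div_four_sub_LamΛ a hx.ne']
    exact mul_pos hcoeff (by linarith [add_one_lt_exp (by positivity : 2 * (a * x) ≠ 0)])
end

section
/- For every real number y > 0, one has y²(e^y − 1) + 12(e^y − 1) > 6y(e^y + 1). -/
/-!
The inequality says `(y² + 6y + 12) / (y² - 6y + 12) < exp y`: the `[2/2]` Padé approximant of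
`exp` lies below it for `y > 0`. Multiplying the degree-five Taylor lower bound of `exp y` by the
positive quadratic `y² - 6y + 12` leaves a surplus of exactly `y⁵ (y² - y + 2) / 120 > 0`.
-/

open Real

lemma taylor_five_le_exp {y : ℝ} (hy : 0 ≤ y) :
    1 + y + y ^ 2 / 2 + y ^ 3 / 6 + y ^ 4 / 24 + y ^ 5 / 120 ≤ exp y := by
  have h := sum_le_exp_of_nonneg hy 6
  norm_num [Finset.sum_range_succ, Nat.factorial] at h
  linarith

lemma padeNum_lt_padeDen_mul_exp {y : ℝ} (hy : 0 < y) :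
    y ^ 2 + 6 * y + 12 < (y ^ 2 - 6 * y + 12) * exp y := by
  have hden : 0 < y ^ 2 - 6 * y + 12 := by nlinarith [sq_nonneg (y - 3)]
  have hsurplus : 0 < y ^ 5 * (y ^ 2 - y + 2) / 120 := by
    have : 0 < y ^ 2 - y + 2 := by nlinarith [sq_nonneg (y - 1)]
    positivity
  calc y ^ 2 + 6 * y + 12
      < y ^ 2 + 6 * y + 12 + y ^ 5 * (y ^ 2 - y + 2) / 120 := by linarith
    _ = (y ^ 2 - 6 * y + 12) *
          (1 + y + y ^ 2 / 2 + y ^ 3 / 6 + y ^ 4 / 24 + y ^ 5 / 120) := by ring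
    _ ≤ (y ^ 2 - 6 * y + 12) * exp y :=
        mul_le_mul_of_nonneg_left (taylor_five_le_exp hy.le) hden.le

/-- Nonnegativity (in fact positivity for `x > 0`) of the conformal scalar
curvature of the Cao-type steady GKRS on `ℂ²`, reduced to a real inequality. -/
theorem conformal_scalar_curvature_pos (y : ℝ) (hy : 0 < y) :
    6 * y * (Real.exp y + 1) <
      y ^ 2 * (Real.exp y - 1) + 12 * (Real.exp y - 1) := by
  linear_combination padeNum_lt_padeDen_mul_exp hy
end

section
/- Let a > 0 be a real number and let ξ₁, ξ₂ be real numbers with 0 ≤ ξ₁ ≤ 1 ≤ ξ₂ and ξ₁ < ξ₂. Then 0 < (e^{−2aξ₁} − e^{−2aξ₂})/(ξ₂ − ξ₁) ≤ 1 − e^{−2a}. -/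
open Real Set

theorem ConvexOn.slope_le_slope_of_le {𝕜 : Type*} [Field 𝕜] [LinearOrder 𝕜]
    [IsStrictOrderedRing 𝕜] {s : Set 𝕜} {f : 𝕜 → 𝕜} (hf : ConvexOn 𝕜 s f)
    {x y x' y' : 𝕜} (hx : x ∈ s) (hy : y ∈ s) (hx' : x' ∈ s) (hy' : y' ∈ s)
    (hxy : x < y) (hxy' : x' < y') (hxx' : x ≤ x') (hyy' : y ≤ y') : slope f x y ≤ slope f x' y' :=
  calc slope f x y ≤ slope f x y' :=
        hf.slope_mono hx ⟨hy, hxy.ne'⟩ ⟨hy', (hxy.trans_le hyy').ne'⟩ hyy'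
    _ = slope f y' x := slope_comm f x y'
    _ ≤ slope f y' x' :=
        hf.slope_mono hy' ⟨hx, (hxy.trans_le hyy').ne⟩ ⟨hx', hxy'.ne⟩ hxx'
    _ = slope f x' y' := slope_comm f y' x'

theorem convexOn_exp_mul (c : ℝ) : ConvexOn ℝ univ fun x ↦ exp (c * x) :=
  convexOn_exp.comp_linearMap (LinearMap.mul ℝ ℝ c)

theorem scalar_curvature_bounds_general (a ξ₁ ξ₂ : ℝ) (ha : 0 < a)
    (h₁ : 0 ≤ ξ₁) (h₃ : 1 ≤ ξ₂) (h₄ : ξ₁ < ξ₂) :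
    0 < (Real.exp (-(2 * a * ξ₁)) - Real.exp (-(2 * a * ξ₂))) / (ξ₂ - ξ₁) ∧
      (Real.exp (-(2 * a * ξ₁)) - Real.exp (-(2 * a * ξ₂))) / (ξ₂ - ξ₁) ≤
        1 - Real.exp (-(2 * a)) := by
  have hdecay : exp (-(2 * a * ξ₂)) < exp (-(2 * a * ξ₁)) := exp_lt_exp.2 (by nlinarith)
  refine ⟨div_pos (sub_pos.2 hdecay) (sub_pos.2 h₄), ?_⟩
  -- The quantity is minus a secant slope of the convex `x ↦ e^{-2ax}`; since `0 ≤ ξ₁` and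
  -- `1 ≤ ξ₂`, that slope is at least the one over `[0, 1]`.
  have hslope := (convexOn_exp_mul (-(2 * a))).slope_le_slope_of_le (mem_univ 0) (mem_univ 1)
    (mem_univ ξ₁) (mem_univ ξ₂) one_pos h₄ h₁ h₃
  simp only [slope_def_field, neg_mul, mul_zero, mul_one, neg_zero, exp_zero, sub_zero,
    div_one] at hslope
  rw [← neg_sub, neg_div]
  linarith

/-- Bounds on the scalar curvature of the Cao-type steady GKRS on `ℂ²`:
`0 < Scal_g ≤ 4a²(1 − e^{−2a})`, with the maximum at the origin. -/
theorem scalar_curvature_bounds (a ξ₁ ξ₂ : ℝ) (ha : 0 < a)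
    (h₁ : 0 ≤ ξ₁) (h₂ : ξ₁ ≤ 1) (h₃ : 1 ≤ ξ₂) (h₄ : ξ₁ < ξ₂) :
    0 < (Real.exp (-(2 * a * ξ₁)) - Real.exp (-(2 * a * ξ₂))) / (ξ₂ - ξ₁) ∧
      (Real.exp (-(2 * a * ξ₁)) - Real.exp (-(2 * a * ξ₂))) / (ξ₂ - ξ₁) ≤
        1 - Real.exp (-(2 * a)) :=
  scalar_curvature_bounds_general a ξ₁ ξ₂ ha h₁ h₃ h₄
end
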